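/- Let γ₀ be a hyperbolic element of PSL(2,R) × PSL(2,R) preserving the domain W ⊂ dS² bounded by two invariant isotropic geodesics, where dS² is identified with RP¹ × RP¹ minus the diagonal and W = {(x,y) : x ∈ I, y ≠ x} for an interval I ⊂ RP¹ whose endpoints are the fixed points of the first factor. Then the action of γ₀ on W is free and properly discontinuous, and the second isotropic foliation (by lines RP¹ × {*} intersected with W) descends to the quotient with exactly two compact leaves. -/

import Mathlib

/-- Lifted model of the region `W ⊂ dS² = ℝP¹ × ℝP¹ ∖ Δ` bounded by the two
invariant isotropic geodesics: pairs `(x, y)` with `x` in the (lifted)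
interval `(x₀, x₁)` and `y ≠ x`, represented by `x < y < δ x`. -/
def Wset (δ : ℝ ≃ₜ ℝ) (x₀ x₁ : ℝ) : Set (ℝ × ℝ) :=
  {p | x₀ < p.1 ∧ p.1 < x₁ ∧ p.1 < p.2 ∧ p.2 < δ p.1}

/-- The leaf of the second isotropic foliation (lines `ℝP¹ × {c}`) through the
projective point represented by `c`. -/
def leafSet (δ : ℝ ≃ₜ ℝ) (x₀ x₁ c : ℝ) : Set (ℝ × ℝ) :=
  {p ∈ Wset δ x₀ x₁ | ∃ n : ℤ, p.2 = (δ.toEquiv ^ n) c}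

/-!
On the universal cover `g` and the deck translation `δ` are commuting increasing homeomorphisms,
and every increasing map fixing `x₀` and `x₁` and commuting with `δ` preserves `W` and permutes
the leaves. A point of `W` has first coordinate in `(x₀, x₁)`, where no nontrivial power of the
hyperbolic `g` has a fixed point; so the action is free, and a small interval `(a, g a)` around
that coordinate is wandering, which gives proper discontinuity. Every leaf is nonempty, since
every `δ`-orbit meets the fundamental domain `(x₀, δ x₀]`; hence `g ^ m` fixes the leaf over `c`
only if `g ^ m c` is a `δ`-translate of `c`, which by hyperbolicity happens only on the
`δ`-orbits of the endpoints.
-/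

open Set Filter Topology

namespace Equiv.Perm

variable {α β : Type*}

def prodCongrHom : Perm α × Perm β →* Perm (α × β) where
  toFun e := e.1.prodCongr e.2
  map_one' := rfl
  map_mul' _ _ := rfl

lemma prodCongr_zpow (e : Perm α) (f : Perm β) (n : ℤ) :
    e.prodCongr f ^ n = (e ^ n).prodCongr (f ^ n) :=
  (map_zpow prodCongrHom (e, f) n).symm

section LinearOrder

variable [LinearOrder α]

variable (α) in
def strictMonoSubgroup : Subgroup (Perm α) where
  carrier := {e | StrictMono e}
  mul_mem' hf hg := hf.comp hg
  one_mem' := strictMono_id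
  inv_mem' he _ _ h := he.lt_iff_lt.mp (by simpa using h)

lemma strictMono_zpow {e : Perm α} (he : StrictMono e) (n : ℤ) : StrictMono ⇑(e ^ n) :=
  (strictMonoSubgroup α).zpow_mem he n

lemma strictMono_zpow_apply {e : Perm α} (he : StrictMono e) {a : α} (ha : a < e a) :
    StrictMono fun n : ℤ => (e ^ n) a :=
  strictMono_int_of_lt_succ fun n => by
    simpa only [zpow_add_one, mul_apply] using strictMono_zpow he n ha

lemma disjoint_zpow_image_Ioo {e : Perm α} (he : StrictMono e) {a : α} (ha : a < e a)
    {n : ℤ} (hn : n ≠ 0) : _root_.Disjoint (⇑(e ^ n) '' Ioo a (e a)) (Ioo a (e a)) := by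
  set u : ℤ → α := fun n => (e ^ n) a
  have himage : ⇑(e ^ n) '' Ioo a (e a) ⊆ Ioo (u n) (u (Order.succ n)) := by
    rintro _ ⟨s, hs, rfl⟩
    simp only [u, Order.succ_eq_add_one, zpow_add_one, mul_apply]
    exact ⟨strictMono_zpow he n hs.1, strictMono_zpow he n hs.2⟩
  have hbase : Ioo a (e a) = Ioo (u 0) (u (Order.succ 0)) := by simp [u]
  rw [hbase] at himage ⊢
  exact ((strictMono_zpow_apply he ha).monotone.pairwise_disjoint_on_Ioo_succ hn).mono_left
    himage

section Topology

variable [TopologicalSpace α] [OrderTopology α] [DenselyOrdered α]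

lemma exists_isOpen_disjoint_zpow_image_of_lt {e : Perm α} (he : StrictMono e) {x : α}
    (hx : x < e x) :
    ∃ U : Set α, IsOpen U ∧ x ∈ U ∧ ∀ n : ℤ, n ≠ 0 → _root_.Disjoint (⇑(e ^ n) '' U) U := by
  obtain ⟨a, hxa, hax⟩ :=
    exists_between (show e⁻¹ x < x by simpa using strictMono_zpow he (-1) hx)
  have hxea : x < e a := by simpa using he hxa
  exact ⟨Ioo a (e a), isOpen_Ioo, ⟨hax, hxea⟩,
    fun n hn => disjoint_zpow_image_Ioo he (hax.trans hxea) hn⟩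

lemma exists_isOpen_disjoint_zpow_image {e : Perm α} (he : StrictMono e) {x : α}
    (hx : e x ≠ x) :
    ∃ U : Set α, IsOpen U ∧ x ∈ U ∧ ∀ n : ℤ, n ≠ 0 → _root_.Disjoint (⇑(e ^ n) '' U) U := by
  rcases hx.lt_or_gt with hlt | hgt
  · obtain ⟨U, hU, hxU, hdisj⟩ := exists_isOpen_disjoint_zpow_image_of_lt
      ((strictMonoSubgroup α).inv_mem he) (by simpa using strictMono_zpow he (-1) hlt)
    exact ⟨U, hU, hxU, fun n hn => by simpa [inv_zpow'] using hdisj (-n) (neg_ne_zero.2 hn)⟩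
  · exact exists_isOpen_disjoint_zpow_image_of_lt he hgt

end Topology

end LinearOrder

section Unbounded

variable [ConditionallyCompleteLinearOrder α] [TopologicalSpace α] [OrderTopology α]
  {e : Perm α}

lemma apply_eq_of_tendsto_zpow_apply (hcont : Continuous e) {l : Filter ℤ} [l.NeBot]
    (hl : Tendsto (1 + ·) l l) {a L : α} (h : Tendsto (fun n => (e ^ n) a) l (𝓝 L)) :
    e L = L :=
  tendsto_nhds_unique ((hcont.tendsto L).comp h)
    (by simpa only [Function.comp_def, zpow_one_add, mul_apply] using h.comp hl)

lemma not_bddAbove_range_zpow_apply (hcont : Continuous e) (he : StrictMono e)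
    (hlt : ∀ x, x < e x) (a : α) : ¬BddAbove (range fun n : ℤ => (e ^ n) a) := fun hbdd =>
  (hlt _).ne' <| apply_eq_of_tendsto_zpow_apply hcont
    (tendsto_atTop_add_const_left atTop 1 tendsto_id)
    (tendsto_atTop_ciSup (strictMono_zpow_apply he (hlt a)).monotone hbdd)

lemma not_bddBelow_range_zpow_apply (hcont : Continuous e) (he : StrictMono e)
    (hlt : ∀ x, x < e x) (a : α) : ¬BddBelow (range fun n : ℤ => (e ^ n) a) := fun hbdd =>
  (hlt _).ne' <| apply_eq_of_tendsto_zpow_apply hcont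
    (tendsto_atBot_add_const_left atBot 1 tendsto_id)
    (tendsto_atBot_ciInf (strictMono_zpow_apply he (hlt a)).monotone hbdd)

lemma exists_zpow_apply_mem_Ioc (hcont : Continuous e) (he : StrictMono e)
    (hlt : ∀ x, x < e x) (a c : α) : ∃ n : ℤ, (e ^ n) c ∈ Ioc a (e a) := by
  have hu := strictMono_zpow_apply he (hlt c)
  obtain ⟨_, ⟨i, rfl⟩, hi⟩ := not_bddBelow_iff.1 (not_bddBelow_range_zpow_apply hcont he hlt c) a
  obtain ⟨_, ⟨j, rfl⟩, hj⟩ := not_bddAbove_iff.1 (not_bddAbove_range_zpow_apply hcont he hlt c) a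
  obtain ⟨k, hk, hmax⟩ := Int.exists_greatest_of_bdd (P := fun k => (e ^ k) c ≤ a)
    ⟨j, fun k hk => (hu.lt_iff_lt.1 (hk.trans_lt hj)).le⟩ ⟨i, hi.le⟩
  refine ⟨1 + k, ?_, ?_⟩
  · by_contra! h
    have := hmax _ h
    omega
  · simpa only [zpow_one_add, mul_apply] using he.monotone hk

end Unbounded

end Equiv.Perm

open Equiv Perm

section Strip

variable {δ : ℝ ≃ₜ ℝ} {x₀ x₁ : ℝ}

lemma isOpen_Wset : IsOpen (Wset δ x₀ x₁) :=
  (isOpen_lt continuous_const continuous_fst).inter <|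
    (isOpen_lt continuous_fst continuous_const).inter <|
      (isOpen_lt continuous_fst continuous_snd).inter <|
        isOpen_lt continuous_snd (δ.continuous.comp continuous_fst)

lemma zpow_apply_ne_of_mem_Ioo (hδmono : StrictMono δ) (hδ : ∀ x, x < δ x)
    (h1δ : x₁ < δ x₀) {x : ℝ} (hx : x ∈ Ioo x₀ x₁) (n : ℤ) :
    (δ.toEquiv ^ n) x₀ ≠ x ∧ (δ.toEquiv ^ n) x₁ ≠ x := by
  have hδx₀ : (δ.toEquiv ^ (0 + 1 : ℤ)) x₀ = δ x₀ := by simp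
  have hδx₁ : (δ.toEquiv ^ (-1 : ℤ)) x₁ < x₀ := by
    simpa using strictMono_zpow (e := δ.toEquiv) hδmono (-1) h1δ
  exact ⟨(strictMono_zpow_apply hδmono (hδ x₀)).monotone.ne_of_lt_of_lt_int 0 (by simpa using hx.1)
      (by rw [hδx₀]; exact hx.2.trans h1δ) n,
    (strictMono_zpow_apply hδmono (hδ x₁)).monotone.ne_of_lt_of_lt_int (-1) (hδx₁.trans hx.1)
      (by simpa using hx.2) n⟩

lemma leafSet_nonempty (hδmono : StrictMono δ) (hδ : ∀ x, x < δ x) (h01 : x₀ < x₁) (c : ℝ) :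
    (leafSet δ x₀ x₁ c).Nonempty := by
  obtain ⟨k, hxy, hyδ⟩ := exists_zpow_apply_mem_Ioc δ.continuous hδmono hδ x₀ c
  set y := (δ.toEquiv ^ k) c
  have hy : δ.symm y < y := by simpa using hδ (δ.symm y)
  have hy₁ : δ.symm y < x₁ := hδmono.lt_iff_lt.1 (by simpa using hyδ.trans_lt (hδmono h01))
  obtain ⟨x, hx, hx'⟩ := exists_between (max_lt (lt_min h01 hxy) (lt_min hy₁ hy))
  rw [max_lt_iff] at hx
  rw [lt_min_iff] at hx'
  exact ⟨(x, y), ⟨hx.1, hx'.1, hx'.2, by simpa using hδmono hx.2⟩, k, rfl⟩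

lemma exists_eq_zpow_apply_of_leafSet_eq (hδmono : StrictMono δ) (hδ : ∀ x, x < δ x)
    (h01 : x₀ < x₁) {c d : ℝ} (h : leafSet δ x₀ x₁ d = leafSet δ x₀ x₁ c) :
    ∃ k : ℤ, d = (δ.toEquiv ^ k) c := by
  obtain ⟨p, hpc⟩ := leafSet_nonempty hδmono hδ h01 c
  obtain ⟨-, i, hi⟩ : p ∈ leafSet δ x₀ x₁ d := h ▸ hpc
  obtain ⟨-, j, hj⟩ := hpc
  refine ⟨-i + j, ?_⟩
  rw [zpow_add, mul_apply, ← hj, hi, ← mul_apply, ← zpow_add, neg_add_cancel, zpow_zero, one_apply]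

variable {f : Perm ℝ}

lemma mapsTo_Wset (hf : StrictMono f) (h₀ : f x₀ = x₀) (h₁ : f x₁ = x₁)
    (hfδ : Commute f δ.toEquiv) : MapsTo (f.prodCongr f) (Wset δ x₀ x₁) (Wset δ x₀ x₁) := by
  rintro p ⟨hp₀, hp₁, hp, hpδ⟩
  refine ⟨h₀ ▸ hf hp₀, h₁ ▸ hf hp₁, hf hp, ?_⟩
  exact (hf hpδ).trans_eq (DFunLike.congr_fun hfδ.eq p.1)

lemma image_leafSet_subset (hf : StrictMono f) (h₀ : f x₀ = x₀) (h₁ : f x₁ = x₁)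
    (hfδ : Commute f δ.toEquiv) (c : ℝ) :
    f.prodCongr f '' leafSet δ x₀ x₁ c ⊆ leafSet δ x₀ x₁ (f c) := by
  rintro _ ⟨p, ⟨hp, n, hpn⟩, rfl⟩
  refine ⟨mapsTo_Wset hf h₀ h₁ hfδ hp, n, ?_⟩
  simp only [prodCongr_apply, Prod.map_snd, hpn, ← mul_apply, (hfδ.zpow_right n).eq]

lemma image_leafSet (hf : StrictMono f) (h₀ : f x₀ = x₀) (h₁ : f x₁ = x₁)
    (hfδ : Commute f δ.toEquiv) (c : ℝ) :
    f.prodCongr f '' leafSet δ x₀ x₁ c = leafSet δ x₀ x₁ (f c) := by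
  have hinv := image_leafSet_subset ((strictMonoSubgroup ℝ).inv_mem hf)
    (inv_eq_iff_eq.2 h₀.symm) (inv_eq_iff_eq.2 h₁.symm) hfδ.inv_left (f c)
  refine (image_leafSet_subset hf h₀ h₁ hfδ c).antisymm fun q hq => ⟨(f⁻¹.prodCongr f⁻¹) q, ?_, ?_⟩
  · simpa using hinv (mem_image_of_mem _ hq)
  · ext <;> simp

lemma exists_isOpen_subset_Wset_disjoint_zpow_image (hf : StrictMono f) {p : ℝ × ℝ}
    (hp : p ∈ Wset δ x₀ x₁) (hfp : f p.1 ≠ p.1) :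
    ∃ U : Set (ℝ × ℝ), IsOpen U ∧ p ∈ U ∧ U ⊆ Wset δ x₀ x₁ ∧
      ∀ n : ℤ, n ≠ 0 → Disjoint (⇑(f.prodCongr f ^ n) '' U) U := by
  obtain ⟨U, hU, hpU, hdisj⟩ := exists_isOpen_disjoint_zpow_image hf hfp
  refine ⟨Wset δ x₀ x₁ ∩ Prod.fst ⁻¹' U, isOpen_Wset.inter (hU.preimage continuous_fst),
    ⟨hp, hpU⟩, inter_subset_left, fun n hn => ?_⟩
  refine ((hdisj n hn).preimage Prod.fst).mono ?_ inter_subset_right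
  rintro _ ⟨q, ⟨-, hq⟩, rfl⟩
  rw [prodCongr_zpow]
  exact mem_image_of_mem _ hq

end Strip

/-- A hyperbolic element `γ₀ = (g, g)` of `PSL(2,ℝ) × PSL(2,ℝ)` preserves the
region `W ⊂ dS² = ℝP¹ × ℝP¹ ∖ Δ` over the interval `I` whose endpoints are the
fixed points of `g`; its action on `W` is free and properly discontinuous, it
permutes the leaves of the second isotropic foliation (sending the leaf over
`c` to the leaf over `g c`), and exactly the two leaves over the fixed points
`x₀`, `x₁` are invariant, i.e. the foliation descends to the quotient with
exactly two compact leaves.  (Everything is expressed in the universal cover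
`ℝ` of `ℝP¹`, with central deck translation `δ`.) -/
theorem stmt13 (δ g : ℝ ≃ₜ ℝ)
    (hδmono : StrictMono δ) (hδ : ∀ x : ℝ, x < δ x) (hgmono : StrictMono g)
    (hcomm : ∀ x : ℝ, g (δ x) = δ (g x))
    (x₀ x₁ : ℝ) (h01 : x₀ < x₁) (h1δ : x₁ < δ x₀)
    (hfix : ∀ x : ℝ, g x = x ↔
      ((∃ n : ℤ, x = (δ.toEquiv ^ n) x₀) ∨ (∃ n : ℤ, x = (δ.toEquiv ^ n) x₁)))
    (hhyp : ∀ m k : ℤ, m ≠ 0 → ∀ x : ℝ, (g.toEquiv ^ m) x = (δ.toEquiv ^ k) x →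
      ∃ j : ℤ, x = (δ.toEquiv ^ j) x₀ ∨ x = (δ.toEquiv ^ j) x₁) :
    (∀ p ∈ Wset δ x₀ x₁, (g.toEquiv.prodCongr g.toEquiv) p ∈ Wset δ x₀ x₁) ∧
    (∀ n : ℤ, n ≠ 0 → ∀ p ∈ Wset δ x₀ x₁,
      ((g.toEquiv.prodCongr g.toEquiv) ^ n) p ≠ p) ∧
    (∀ p ∈ Wset δ x₀ x₁, ∃ U : Set (ℝ × ℝ), IsOpen U ∧ p ∈ U ∧ U ⊆ Wset δ x₀ x₁ ∧
      ∀ n : ℤ, n ≠ 0 →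
        Disjoint ((fun q => ((g.toEquiv.prodCongr g.toEquiv) ^ n) q) '' U) U) ∧
    (∀ c : ℝ, (fun q => (g.toEquiv.prodCongr g.toEquiv) q) '' leafSet δ x₀ x₁ c
        = leafSet δ x₀ x₁ (g c)) ∧
    (∀ c : ℝ,
      ((∃ m : ℤ, m ≠ 0 ∧
          (fun q => ((g.toEquiv.prodCongr g.toEquiv) ^ m) q) '' leafSet δ x₀ x₁ c
            = leafSet δ x₀ x₁ c) ↔
        ((∃ n : ℤ, c = (δ.toEquiv ^ n) x₀) ∨ (∃ n : ℤ, c = (δ.toEquiv ^ n) x₁)))) := by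
  have hgδ : Commute g.toEquiv δ.toEquiv := Equiv.ext hcomm
  have hg₀ : g x₀ = x₀ := (hfix x₀).2 (Or.inl ⟨0, rfl⟩)
  have hg₁ : g x₁ = x₁ := (hfix x₁).2 (Or.inr ⟨0, rfl⟩)
  have hleaf : ∀ (m : ℤ) (c : ℝ),
      (fun q => ((g.toEquiv.prodCongr g.toEquiv) ^ m) q) '' leafSet δ x₀ x₁ c
        = leafSet δ x₀ x₁ ((g.toEquiv ^ m) c) := fun m c => by
    rw [prodCongr_zpow]
    exact image_leafSet (strictMono_zpow hgmono m) (Function.IsFixedPt.perm_zpow hg₀ m)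
      (Function.IsFixedPt.perm_zpow hg₁ m) (hgδ.zpow_left m) c
  have hfree : ∀ x ∈ Ioo x₀ x₁, ∀ n : ℤ, n ≠ 0 → (g.toEquiv ^ n) x ≠ x := fun x hx n hn h => by
    obtain ⟨j, hj⟩ := hhyp n 0 hn x (by simpa using h)
    have := zpow_apply_ne_of_mem_Ioo hδmono hδ h1δ hx j
    exact hj.elim (fun h => this.1 h.symm) (fun h => this.2 h.symm)
  refine ⟨fun p hp => mapsTo_Wset hgmono hg₀ hg₁ hgδ hp, ?_, ?_, fun c => by simpa using hleaf 1 c,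
    fun c => ⟨?_, ?_⟩⟩
  · intro n hn p hp h
    rw [prodCongr_zpow] at h
    exact hfree p.1 ⟨hp.1, hp.2.1⟩ n hn (congrArg Prod.fst h)
  · exact fun p hp => exists_isOpen_subset_Wset_disjoint_zpow_image hgmono hp
      (by simpa using hfree p.1 ⟨hp.1, hp.2.1⟩ 1 one_ne_zero)
  · rintro ⟨m, hm, h⟩
    rw [hleaf] at h
    obtain ⟨k, hk⟩ := exists_eq_zpow_apply_of_leafSet_eq hδmono hδ h01 h
    obtain ⟨j, hj⟩ := hhyp m k hm c hk
    exact hj.imp (⟨j, ·⟩) (⟨j, ·⟩)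
  · intro hc
    refine ⟨1, one_ne_zero, ?_⟩
    rw [hleaf, zpow_one]
    exact congrArg _ ((hfix c).2 hc)
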